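/- Let G be a finitely generated perfect group and n ≥ 0 a fixed integer. Then for every group H and every surjective group homomorphism p : H → G whose kernel N satisfies N ≤ Z_n(H), the subgroup γ_{n+1}(H) is finitely generated. -/

import Mathlib

/-!
Put `K = γ_{n+1}(H)` and `N = ker p`. Since `G` is perfect, `p(K) = γ_{n+1}(G) = G`, so finitely
many elements of `K` generate a subgroup `T` with `H = T N`. The three subgroups lemma gives
`[γ_{n+1}(H), Z_{n+1}(H)] = 1`, so `T` centralizes `N`; and `γ_{n+1}(N) = 1` because
`N ≤ Z_n(H)`. For commuting subgroups `γ_{n+1}(T N) = γ_{n+1}(T) γ_{n+1}(N)`, hence `K ≤ T ≤ K`.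
-/

namespace Subgroup

variable {G : Type*} [Group G]

theorem commutator_commutator_le_of_rotate {A B C D : Subgroup G} [D.Normal]
    (h₁ : ⁅⁅B, C⁆, A⁆ ≤ D) (h₂ : ⁅⁅C, A⁆, B⁆ ≤ D) : ⁅⁅A, B⁆, C⁆ ≤ D := by
  have in_quotient (X Y Z : Subgroup G) : ⁅⁅X, Y⁆, Z⁆ ≤ D ↔
      ⁅⁅X.map (QuotientGroup.mk' D), Y.map (QuotientGroup.mk' D)⁆,
        Z.map (QuotientGroup.mk' D)⁆ = ⊥ := by
    rw [← map_commutator, ← map_commutator, map_eq_bot_iff, QuotientGroup.ker_mk']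
  rw [in_quotient] at h₁ h₂ ⊢
  exact commutator_commutator_eq_bot_of_rotate h₁ h₂

theorem commutator_lowerCentralSeries_upperCentralSeries_le (i m : ℕ) :
    ⁅(⊤ : Subgroup G).lowerCentralSeries i, upperCentralSeries G (i + m + 1)⁆ ≤
      upperCentralSeries G m := by
  induction i generalizing m with
  | zero =>
    rw [lowerCentralSeries_zero, commutator_comm, zero_add]
    exact commutator_upperCentralSeries_top_le G m
  | succ i ih =>
    rw [lowerCentralSeries_succ, show i + 1 + m + 1 = i + (m + 1) + 1 by omega]
    apply commutator_commutator_le_of_rotate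
    · calc ⁅⁅⊤, upperCentralSeries G (i + (m + 1) + 1)⁆, (⊤ : Subgroup G).lowerCentralSeries i⁆
          ≤ ⁅upperCentralSeries G (i + m + 1), (⊤ : Subgroup G).lowerCentralSeries i⁆ := by
            rw [commutator_comm ⊤]
            exact commutator_mono (commutator_upperCentralSeries_top_le G _) le_rfl
        _ ≤ upperCentralSeries G m := by
            rw [commutator_comm]
            exact ih m
    · calc ⁅⁅upperCentralSeries G (i + (m + 1) + 1), (⊤ : Subgroup G).lowerCentralSeries i⁆, ⊤⁆
          ≤ ⁅upperCentralSeries G (m + 1), ⊤⁆ := by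
            rw [commutator_comm (upperCentralSeries G _)]
            exact commutator_mono (ih (m + 1)) le_rfl
        _ ≤ upperCentralSeries G m := commutator_upperCentralSeries_top_le G m

theorem lowerCentralSeries_upperCentralSeries_le (i m : ℕ) :
    (upperCentralSeries G (i + m)).lowerCentralSeries i ≤ upperCentralSeries G m := by
  induction i generalizing m with
  | zero => rw [zero_add]; rfl
  | succ i ih =>
    rw [lowerCentralSeries_succ, show i + 1 + m = i + (m + 1) by omega]
    exact (commutator_mono (ih (m + 1)) le_top).trans
      (commutator_upperCentralSeries_top_le G m)

theorem lowerCentralSeries_sup_of_commutator_eq_bot {A B : Subgroup G} (h : ⁅A, B⁆ = ⊥)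
    (n : ℕ) : (A ⊔ B).lowerCentralSeries n = A.lowerCentralSeries n ⊔ B.lowerCentralSeries n := by
  refine le_antisymm ?_ (sup_le (lowerCentralSeries_mono n le_sup_left)
    (lowerCentralSeries_mono n le_sup_right))
  have comm (a : A) (b : B) : Commute (A.subtype a) (B.subtype b) :=
    (mem_centralizer_iff.mp (commutator_eq_bot_iff_le_centralizer.mp h a.2) b b.2).symm
  set φ := A.subtype.noncommCoprod B.subtype comm
  have hφ : φ.range = A ⊔ B := by
    rw [MonoidHom.noncommCoprod_range, range_subtype, range_subtype]
  rw [← hφ, MonoidHom.range_eq_map, ← map_lowerCentralSeries, top_lowerCentralSeries_prod,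
    ← top_subtype_lowerCentralSeries A, ← top_subtype_lowerCentralSeries B]
  rintro - ⟨⟨a, b⟩, hab, rfl⟩
  exact mul_mem (mem_sup_left (mem_map_of_mem _ hab.1)) (mem_sup_right (mem_map_of_mem _ hab.2))

theorem top_lowerCentralSeries_eq_top_of_commutator_eq_top (h : _root_.commutator G = ⊤) (n : ℕ) :
    (⊤ : Subgroup G).lowerCentralSeries n = ⊤ := by
  induction n with
  | zero => rfl
  | succ n ih => rw [lowerCentralSeries_succ, ih]; exact h

theorem exists_fg_le_map_eq_top {H : Type*} [Group H] (hG : Group.FG G) (p : H →* G)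
    {K : Subgroup H} (hK : K.map p = ⊤) : ∃ T ≤ K, T.FG ∧ T.map p = ⊤ := by
  obtain ⟨S, hS, hSfin⟩ := Group.fg_iff.mp hG
  have lift (g : G) : ∃ x ∈ K, p x = g := mem_map.mp (hK ▸ mem_top g)
  choose σ hσK hσp using lift
  refine ⟨closure (σ '' S), ?_, (fg_iff _).mpr ⟨σ '' S, rfl, hSfin.image σ⟩, ?_⟩
  · rw [closure_le]
    rintro - ⟨g, -, rfl⟩
    exact hσK g
  · rw [MonoidHom.map_closure, Set.image_image]
    simp only [hσp, Set.image_id', hS]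

end Subgroup

/-- If `G` is a finitely generated perfect group, then for every surjective homomorphism
`p : H → G` whose kernel is contained in the `n`-th term of the upper central series of
`H`, the subgroup `γ_{n+1}(H) = lowerCentralSeries H n` is finitely generated. -/
theorem fg_lowerCentralSeries_of_fg_perfect
    {G : Type*} [Group G] (hFG : Group.FG G) (hperf : commutator G = ⊤) (n : ℕ)
    {H : Type*} [Group H] (p : H →* G) (hp : Function.Surjective p)
    (hker : p.ker ≤ upperCentralSeries H n) :
    Group.FG ((⊤ : Subgroup H).lowerCentralSeries n) := by
  have hK : ((⊤ : Subgroup H).lowerCentralSeries n).map p = ⊤ := by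
    rw [Subgroup.map_lowerCentralSeries, Subgroup.map_top_of_surjective p hp,
      Subgroup.top_lowerCentralSeries_eq_top_of_commutator_eq_top hperf]
  obtain ⟨T, hTK, hTfg, hT⟩ := Subgroup.exists_fg_le_map_eq_top hFG p hK
  have hTN : T ⊔ p.ker = ⊤ := by rw [← Subgroup.comap_map_eq, hT, Subgroup.comap_top]
  have hcomm : ⁅T, p.ker⁆ = ⊥ :=
    le_bot_iff.mp <| (Subgroup.commutator_mono hTK
      (hker.trans (Subgroup.upperCentralSeries_mono H n.le_succ))).trans
      (Subgroup.commutator_lowerCentralSeries_upperCentralSeries_le n 0)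
  have hN : p.ker.lowerCentralSeries n = ⊥ :=
    le_bot_iff.mp <| (Subgroup.lowerCentralSeries_mono n hker).trans
      (Subgroup.lowerCentralSeries_upperCentralSeries_le n 0)
  have hKT : (⊤ : Subgroup H).lowerCentralSeries n ≤ T := by
    rw [← hTN, Subgroup.lowerCentralSeries_sup_of_commutator_eq_bot hcomm, hN, sup_bot_eq]
    exact Subgroup.lowerCentralSeries_le_self T n
  exact (Group.fg_iff_subgroup_fg _).mpr (le_antisymm hKT hTK ▸ hTfg)
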